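/- arXiv:2112.12574 — 2 statements merged into one kernel-verified Lean document; each statement's English description precedes it below -/
import Mathlib

section
/- (Multivariate Esséen inequality) Let τ > 0 and let F be a probability measure on ℝ^d with characteristic function F̂. Then Q(F, τ) ≤ c(d) τ^d ∫_{|t| ≤ 1/τ} |F̂(t)| dt, where |t| = max_j |t_j| and c(d) > 0 depends only on d. -/
open MeasureTheory ProbabilityTheory Metric
open scoped BigOperators RealInnerProductSpace

noncomputable section

/-- The concentration function `Q(F, λ) = sup_x F(x + λB)`,
where `B` is the closed Euclidean ball of radius `1/2`. -/
def concQ {d : ℕ} (F : Measure (EuclideanSpace ℝ (Fin d))) (l : ℝ) : ℝ :=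
  ⨆ x : EuclideanSpace ℝ (Fin d), (F (closedBall x (l / 2))).toReal

/-- The characteristic function of a measure `F` on `ℝ^d`. -/
def charF {d : ℕ} (F : Measure (EuclideanSpace ℝ (Fin d))) (t : EuclideanSpace ℝ (Fin d)) : ℂ :=
  ∫ x, Complex.exp ((⟪t, x⟫ : ℂ) * Complex.I) ∂F

/-- The cube `{t : |t| ≤ T}`, where `|t| = max_j |t_j|`. -/
def cube (d : ℕ) (T : ℝ) : Set (EuclideanSpace ℝ (Fin d)) :=
  {t | ∀ j, |t j| ≤ T}

/-!
Let `tent T v = max (1 - |v| / T) 0`. Its Fourier transform is the Fejér kernel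
`K(u) = 2 (1 - cos (T u)) / (T u²)`, which is nonnegative and at least `2T/5` for `|u| ≤ 1/(2T)`.
For `Φ(t) = ∏ⱼ tent T tⱼ`, Fubini gives
`∫ Φ(t) e^{-i⟨t,x⟩} F̂(t) dt = ∫ ∏ⱼ K(yⱼ - xⱼ) dF(y) ≥ (2T/5)^d F(closedBall x (1/(2T)))`,
while `0 ≤ Φ ≤ 1` vanishes off the cube `|t| ≤ T`, so the left side is at most
`∫_{|t| ≤ T} |F̂|`. Taking `T = 1/τ` gives the inequality with `c(d) = (5/2)^d`.
-/

namespace Esseen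

section Tent

variable {T : ℝ}

def tent (T v : ℝ) : ℝ := max (1 - |v| / T) 0

lemma tent_nonneg (T v : ℝ) : 0 ≤ tent T v := le_max_right _ _

lemma tent_le_one (hT : 0 < T) (v : ℝ) : tent T v ≤ 1 :=
  max_le (sub_le_self _ (div_nonneg (abs_nonneg v) hT.le)) zero_le_one

lemma tent_eq_zero (hT : 0 < T) {v : ℝ} (hv : T ≤ |v|) : tent T v = 0 :=
  max_eq_right (sub_nonpos.2 ((one_le_div hT).2 hv))

lemma tent_of_abs_le (hT : 0 < T) {v : ℝ} (hv : |v| ≤ T) : tent T v = 1 - |v| / T :=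
  max_eq_left (sub_nonneg.2 ((div_le_one hT).2 hv))

@[simp]
lemma tent_neg (T v : ℝ) : tent T (-v) = tent T v := by
  rw [tent, tent, abs_neg]

@[fun_prop]
lemma continuous_tent (T : ℝ) : Continuous (tent T) := by
  unfold tent
  fun_prop

lemma hasCompactSupport_tent (hT : 0 < T) : HasCompactSupport (tent T) :=
  HasCompactSupport.intro isCompact_Icc fun v hv ↦ tent_eq_zero hT <| by
    contrapose! hv
    exact abs_le.1 hv.le

lemma integrable_tent_mul (hT : 0 < T) {g : ℝ → ℝ} (hg : Continuous g) :
    Integrable fun v ↦ tent T v * g v :=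
  ((continuous_tent T).mul hg).integrable_of_hasCompactSupport
    (hasCompactSupport_tent hT).mul_right

def fejerKernel (T u : ℝ) : ℝ := ∫ v, tent T v * Real.cos (v * u)

lemma fejerKernel_eq_intervalIntegral (hT : 0 < T) (u : ℝ) :
    fejerKernel T u = 2 * ∫ v in 0..T, (1 - v / T) * Real.cos (v * u) := by
  have h_even : ∀ v, tent T v * Real.cos (v * u) = tent T |v| * Real.cos (|v| * u) := by
    intro v
    rcases abs_choice v with h | h <;> simp [h]
  rw [fejerKernel, funext h_even, integral_comp_abs (f := fun v ↦ tent T v * Real.cos (v * u)),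
    intervalIntegral.integral_of_le hT.le,
    setIntegral_eq_of_subset_of_forall_sdiff_eq_zero measurableSet_Ioi Set.Ioc_subset_Ioi_self]
  · refine congrArg _ (setIntegral_congr_fun measurableSet_Ioc fun v hv ↦ ?_)
    rw [tent_of_abs_le hT (abs_le.2 ⟨by linarith [hv.1], hv.2⟩), abs_of_pos hv.1]
  · rintro v ⟨hv0, hvT⟩
    simp only [Set.mem_Ioi, Set.mem_Ioc, not_and, not_le] at hv0 hvT
    rw [tent_eq_zero hT (by rw [abs_of_pos hv0]; exact (hvT hv0).le), zero_mul]

lemma fejerKernel_zero (hT : 0 < T) : fejerKernel T 0 = T := by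
  have h_deriv :
      ∀ v ∈ Set.uIcc 0 T, HasDerivAt (fun v ↦ v - v ^ 2 / (2 * T)) (1 - v / T) v := by
    intro v _
    refine ((hasDerivAt_id v).sub ((hasDerivAt_pow 2 v).div_const (2 * T))).congr_deriv ?_
    field_simp
    ring
  simp only [fejerKernel_eq_intervalIntegral hT, mul_zero, Real.cos_zero, mul_one]
  rw [intervalIntegral.integral_eq_sub_of_hasDerivAt h_deriv
    ((by fun_prop : Continuous fun v ↦ 1 - v / T).intervalIntegrable _ _)]
  field_simp
  ring

lemma fejerKernel_of_ne_zero (hT : 0 < T) {u : ℝ} (hu : u ≠ 0) :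
    fejerKernel T u = 2 * (1 - Real.cos (T * u)) / (T * u ^ 2) := by
  set G : ℝ → ℝ :=
    fun v ↦ (1 - v / T) * (Real.sin (v * u) / u) - Real.cos (v * u) / (T * u ^ 2)
  have h_deriv : ∀ v ∈ Set.uIcc 0 T, HasDerivAt G ((1 - v / T) * Real.cos (v * u)) v := by
    intro v _
    have h_sin := (Real.hasDerivAt_sin (v * u)).comp v ((hasDerivAt_id v).mul_const u)
    have h_cos := (Real.hasDerivAt_cos (v * u)).comp v ((hasDerivAt_id v).mul_const u)
    refine ((((hasDerivAt_id v).div_const T).const_sub 1).mul (h_sin.div_const u)).sub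
      (h_cos.div_const (T * u ^ 2)) |>.congr_deriv ?_
    simp only [Function.comp_apply, id]
    field_simp
    ring
  rw [fejerKernel_eq_intervalIntegral hT,
    intervalIntegral.integral_eq_sub_of_hasDerivAt h_deriv
      ((by fun_prop : Continuous fun v ↦ (1 - v / T) * Real.cos (v * u)).intervalIntegrable _ _)]
  simp only [G, div_self hT.ne', sub_self, zero_mul, zero_div, Real.cos_zero, Real.sin_zero]
  field_simp
  ring

lemma fejerKernel_nonneg (hT : 0 < T) (u : ℝ) : 0 ≤ fejerKernel T u := by
  rcases eq_or_ne u 0 with rfl | hu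
  · exact (fejerKernel_zero hT).symm ▸ hT.le
  · rw [fejerKernel_of_ne_zero hT hu]
    have := Real.cos_le_one (T * u)
    positivity

lemma le_fejerKernel (hT : 0 < T) {u : ℝ} (hu : |u| ≤ 1 / (2 * T)) :
    2 / 5 * T ≤ fejerKernel T u := by
  rcases eq_or_ne u 0 with rfl | hu0
  · rw [fejerKernel_zero hT]
    linarith
  have h_small : |T * u| ≤ Real.pi := by
    have : |T * u| ≤ 1 / 2 := by
      rw [abs_mul, abs_of_pos hT]
      calc T * |u| ≤ T * (1 / (2 * T)) := by gcongr
        _ = 1 / 2 := by field_simp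
    linarith [Real.pi_gt_three]
  -- `1 - cos x ≥ (2/π²) x² ≥ x² / 5` on `[-π, π]`
  have h_cos : (T * u) ^ 2 / 5 ≤ 1 - Real.cos (T * u) := by
    have h_pi : Real.pi ^ 2 ≤ 10 := by nlinarith [Real.pi_lt_d2, Real.pi_pos]
    have : (1 : ℝ) / 5 ≤ 2 / Real.pi ^ 2 := by
      rw [div_le_div_iff₀ (by norm_num) (by positivity)]
      linarith
    nlinarith [Real.cos_le_one_sub_mul_cos_sq h_small, sq_nonneg (T * u)]
  rw [fejerKernel_of_ne_zero hT hu0, le_div_iff₀ (by positivity)]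
  nlinarith

lemma integral_tent_mul_sin (T u : ℝ) :
    ∫ v, tent T v * Real.sin (v * u) = 0 := by
  have h := integral_neg_eq_self (fun v ↦ tent T v * Real.sin (v * u)) volume
  simp only [tent_neg, neg_mul, Real.sin_neg, mul_neg, integral_neg] at h
  linarith

lemma integral_tent_mul_exp (hT : 0 < T) (u : ℝ) :
    ∫ v, (tent T v : ℂ) * Complex.exp ((v * u : ℝ) * Complex.I) = fejerKernel T u := by
  have h_split : ∀ v : ℝ, (tent T v : ℂ) * Complex.exp ((v * u : ℝ) * Complex.I)
      = ((tent T v * Real.cos (v * u) : ℝ) : ℂ)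
        + ((tent T v * Real.sin (v * u) : ℝ) : ℂ) * Complex.I := by
    intro v
    rw [Complex.exp_mul_I, ← Complex.ofReal_cos, ← Complex.ofReal_sin]
    push_cast
    ring
  simp_rw [h_split]
  rw [integral_add (integrable_tent_mul hT (by fun_prop)).ofReal
      ((integrable_tent_mul hT (by fun_prop)).ofReal.mul_const _),
    integral_mul_const, integral_complex_ofReal, integral_complex_ofReal, integral_tent_mul_sin]
  simp [fejerKernel]

end Tent

section Pi

variable {ι : Type*} [Fintype ι] {T : ℝ}

def tentPi (T : ℝ) (t : EuclideanSpace ℝ ι) : ℝ := ∏ j, tent T (t j)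

def fejerPi (T : ℝ) (y : EuclideanSpace ℝ ι) : ℝ := ∏ j, fejerKernel T (y j)

lemma tentPi_nonneg (T : ℝ) (t : EuclideanSpace ℝ ι) : 0 ≤ tentPi T t :=
  Finset.prod_nonneg fun _ _ ↦ tent_nonneg T _

lemma tentPi_le_one (hT : 0 < T) (t : EuclideanSpace ℝ ι) : tentPi T t ≤ 1 :=
  Finset.prod_le_one (fun _ _ ↦ tent_nonneg T _) fun _ _ ↦ tent_le_one hT _

@[fun_prop]
lemma continuous_tentPi (T : ℝ) : Continuous (tentPi (ι := ι) T) := by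
  unfold tentPi
  fun_prop

lemma integrable_tentPi (hT : 0 < T) : Integrable (tentPi (ι := ι) T) :=
  ((EuclideanSpace.volume_preserving_symm_measurableEquiv_toLp ι).integrable_comp_emb
    (MeasurableEquiv.measurableEmbedding _)).2 <|
    Integrable.fintype_prod fun _ ↦ (continuous_tent T).integrable_of_hasCompactSupport
      (hasCompactSupport_tent hT)

lemma integral_tentPi_mul_exp (hT : 0 < T) (y : EuclideanSpace ℝ ι) :
    ∫ t, (tentPi T t : ℂ) * Complex.exp (⟪t, y⟫ * Complex.I) = fejerPi T y := by
  have h_prod : ∀ t : EuclideanSpace ℝ ι, (tentPi T t : ℂ) * Complex.exp (⟪t, y⟫ * Complex.I)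
      = ∏ j, (tent T (t j) : ℂ) * Complex.exp ((t j * y j : ℝ) * Complex.I) := by
    intro t
    rw [Finset.prod_mul_distrib, ← Complex.exp_sum, ← Finset.sum_mul]
    simp [tentPi, PiLp.inner_apply, mul_comm]
  simp_rw [h_prod]
  rw [← (EuclideanSpace.volume_preserving_symm_measurableEquiv_toLp ι).symm.integral_comp']
  exact (integral_fintype_prod_volume_eq_prod
    (fun j v ↦ (tent T v : ℂ) * Complex.exp ((v * y j : ℝ) * Complex.I))).trans
    (by simp only [integral_tent_mul_exp hT, fejerPi, Complex.ofReal_prod])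

end Pi

section Fubini

variable {ι : Type*} [Fintype ι] {T : ℝ}
  (μ : Measure (EuclideanSpace ℝ ι)) [IsFiniteMeasure μ]

lemma integrable_tentPi_mul_exp_prod (hT : 0 < T) (x : EuclideanSpace ℝ ι) :
    Integrable (fun p : EuclideanSpace ℝ ι × EuclideanSpace ℝ ι ↦
      (tentPi T p.1 : ℂ) * Complex.exp (⟪p.1, p.2 - x⟫ * Complex.I)) (volume.prod μ) := by
  refine ((integrable_tentPi hT).comp_fst μ).mono'
    (Continuous.aestronglyMeasurable (by fun_prop)) (ae_of_all _ fun p ↦ ?_)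
  simp [Complex.norm_exp_ofReal_mul_I, abs_of_nonneg (tentPi_nonneg T p.1)]

lemma integrable_fejerPi_sub (hT : 0 < T) (x : EuclideanSpace ℝ ι) :
    Integrable (fun y ↦ fejerPi T (y - x)) μ := by
  have h := (integrable_tentPi_mul_exp_prod μ hT x).integral_prod_right
  simp only [integral_tentPi_mul_exp hT] at h
  simpa using h.re

lemma integral_tentPi_mul_charFun (hT : 0 < T) (x : EuclideanSpace ℝ ι) :
    ∫ t, (tentPi T t : ℂ) * (Complex.exp (-⟪t, x⟫ * Complex.I) * charFun μ t)
      = ∫ y, fejerPi T (y - x) ∂μ := by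
  have h_inner : ∀ t, (tentPi T t : ℂ) * (Complex.exp (-⟪t, x⟫ * Complex.I) * charFun μ t)
      = ∫ y, (tentPi T t : ℂ) * Complex.exp (⟪t, y - x⟫ * Complex.I) ∂μ := by
    intro t
    rw [charFun_apply, ← integral_const_mul, ← integral_const_mul]
    congr 1 with y
    rw [← Complex.exp_add, inner_sub_right, real_inner_comm x, real_inner_comm y]
    push_cast
    ring_nf
  simp_rw [h_inner]
  rw [integral_integral_swap (integrable_tentPi_mul_exp_prod μ hT x)]
  simp only [integral_tentPi_mul_exp hT, integral_complex_ofReal]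

lemma mul_measureReal_closedBall_le_integral_fejerPi (hT : 0 < T) (x : EuclideanSpace ℝ ι) :
    (2 / 5 * T) ^ Fintype.card ι * μ.real (closedBall x (1 / (2 * T)))
      ≤ ∫ y, fejerPi T (y - x) ∂μ := by
  have h_int := integrable_fejerPi_sub μ hT x
  have h_ball : ∀ y ∈ closedBall x (1 / (2 * T)),
      (2 / 5 * T) ^ Fintype.card ι ≤ fejerPi T (y - x) := by
    intro y hy
    rw [← Finset.card_univ, ← Finset.prod_const]
    refine Finset.prod_le_prod (fun _ _ ↦ by positivity) fun j _ ↦ le_fejerKernel hT ?_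
    exact (PiLp.norm_apply_le (y - x) j).trans (mem_closedBall_iff_norm.1 hy)
  calc _ ≤ ∫ y in closedBall x (1 / (2 * T)), fejerPi T (y - x) ∂μ :=
        setIntegral_ge_of_const_le_real measurableSet_closedBall (measure_ne_top _ _) h_ball
          h_int.integrableOn
    _ ≤ ∫ y, fejerPi T (y - x) ∂μ := setIntegral_le_integral h_int <| ae_of_all _ fun y ↦
        Finset.prod_nonneg fun j _ ↦ fejerKernel_nonneg hT _

end Fubini

section Cube

variable {d : ℕ} {T : ℝ}

lemma isCompact_cube (d : ℕ) (T : ℝ) : IsCompact (cube d T) := by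
  have h : cube d T = EuclideanSpace.equiv (Fin d) ℝ ⁻¹' Set.Icc (fun _ ↦ -T) fun _ ↦ T := by
    ext t
    simp [cube, abs_le, Pi.le_def, forall_and]
  rw [h]
  exact (EuclideanSpace.equiv (Fin d) ℝ).toHomeomorph.isCompact_preimage.2 isCompact_Icc

lemma tentPi_eq_zero_of_notMem_cube (hT : 0 < T) {t : EuclideanSpace ℝ (Fin d)}
    (ht : t ∉ cube d T) : tentPi T t = 0 := by
  obtain ⟨j, hj⟩ : ∃ j, T < |t j| := by simpa [cube] using ht
  exact Finset.prod_eq_zero (Finset.mem_univ j) (tent_eq_zero hT hj.le)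

lemma norm_integral_tentPi_mul_le (hT : 0 < T) {g : EuclideanSpace ℝ (Fin d) → ℂ}
    (hg : Continuous g) :
    ‖∫ t, (tentPi T t : ℂ) * g t‖ ≤ ∫ t in cube d T, ‖g t‖ := by
  have h_cube := isCompact_cube d T
  calc ‖∫ t, (tentPi T t : ℂ) * g t‖ ≤ ∫ t, tentPi T t * ‖g t‖ := by
        refine (norm_integral_le_integral_norm _).trans_eq
          (integral_congr_ae (ae_of_all _ fun t ↦ ?_))
        simp [abs_of_nonneg (tentPi_nonneg T t)]
    _ = ∫ t in cube d T, tentPi T t * ‖g t‖ :=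
        (setIntegral_eq_integral_of_forall_compl_eq_zero fun t ht ↦ by
          rw [tentPi_eq_zero_of_notMem_cube hT ht, zero_mul]).symm
    _ ≤ ∫ t in cube d T, ‖g t‖ :=
        setIntegral_mono_on
          ((by fun_prop : Continuous fun t ↦ tentPi T t * ‖g t‖).continuousOn.integrableOn_compact
            h_cube)
          (hg.norm.continuousOn.integrableOn_compact h_cube) h_cube.measurableSet
          fun t _ ↦ mul_le_of_le_one_left (norm_nonneg _) (tentPi_le_one hT t)

lemma measureReal_closedBall_le_integral_norm_charFun (hT : 0 < T)
    (μ : Measure (EuclideanSpace ℝ (Fin d))) [IsFiniteMeasure μ] (x : EuclideanSpace ℝ (Fin d)) :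
    (2 / 5 * T) ^ d * μ.real (closedBall x (1 / (2 * T))) ≤ ∫ t in cube d T, ‖charFun μ t‖ := by
  calc (2 / 5 * T) ^ d * μ.real (closedBall x (1 / (2 * T)))
      ≤ ∫ y, fejerPi T (y - x) ∂μ := by
        simpa using mul_measureReal_closedBall_le_integral_fejerPi μ hT x
    _ ≤ ‖∫ t, (tentPi T t : ℂ) * (Complex.exp (-⟪t, x⟫ * Complex.I) * charFun μ t)‖ := by
        rw [integral_tentPi_mul_charFun μ hT x, Complex.norm_real, Real.norm_eq_abs]
        exact le_abs_self _
    _ ≤ ∫ t in cube d T, ‖Complex.exp (-⟪t, x⟫ * Complex.I) * charFun μ t‖ :=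
        norm_integral_tentPi_mul_le hT (by fun_prop)
    _ = ∫ t in cube d T, ‖charFun μ t‖ := by
        simp_rw [norm_mul, ← Complex.ofReal_neg, Complex.norm_exp_ofReal_mul_I, one_mul]

end Cube

lemma charF_eq_charFun {d : ℕ} (F : Measure (EuclideanSpace ℝ (Fin d))) :
    charF F = charFun F := by
  ext t
  simp only [charF, charFun_apply, real_inner_comm]

end Esseen

theorem stmt_4_general (d : ℕ) :
    ∃ C : ℝ, 0 < C ∧
      ∀ (F : Measure (EuclideanSpace ℝ (Fin d))), IsProbabilityMeasure F →
      ∀ τ : ℝ, 0 < τ →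
        concQ F τ ≤ C * τ ^ d * ∫ t in cube d (1 / τ), ‖charF F t‖ := by
  refine ⟨(5 / 2) ^ d, by positivity, fun F _ τ hτ ↦ ciSup_le fun x ↦ ?_⟩
  have h := Esseen.measureReal_closedBall_le_integral_norm_charFun (one_div_pos.2 hτ) F x
  rw [show 1 / (2 * (1 / τ)) = τ / 2 by field_simp, measureReal_def] at h
  have h_const : (5 / 2) ^ d * τ ^ d * (2 / 5 * (1 / τ)) ^ d = 1 := by
    rw [← mul_pow, ← mul_pow]
    field_simp
    norm_num
  calc (F (closedBall x (τ / 2))).toReal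
      = (5 / 2) ^ d * τ ^ d * ((2 / 5 * (1 / τ)) ^ d * (F (closedBall x (τ / 2))).toReal) := by
        rw [← mul_assoc, h_const, one_mul]
    _ ≤ (5 / 2) ^ d * τ ^ d * ∫ t in cube d (1 / τ), ‖charF F t‖ := by
        rw [Esseen.charF_eq_charFun]
        gcongr

/-- **Multivariate Esséen inequality.** For any probability measure `F` on `ℝ^d` and `τ > 0`,
`Q(F, τ) ≤ c(d) τ^d ∫_{|t| ≤ 1/τ} |F̂(t)| dt`. -/
theorem stmt_4 (d : ℕ) (hd : 0 < d) :
    ∃ C : ℝ, 0 < C ∧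
      ∀ (F : Measure (EuclideanSpace ℝ (Fin d))), IsProbabilityMeasure F →
      ∀ τ : ℝ, 0 < τ →
        concQ F τ ≤ C * τ ^ d * ∫ t in cube d (1 / τ), ‖charF F t‖ :=
  stmt_4_general d
end
end

section
/- Let W be a probability measure on ℝ, let λ, T > 0, and let a₁, …, a_n ∈ ℝ^d. Then log ∫_{|t| ≤ T} exp(−(1/2) Σ_{k=1}^n ∫_ℝ (1 − cos(⟨t, a_k⟩ z)) λ W(dz)) dt ≤ ∫_ℝ [ log ∫_{|t| ≤ T} exp(−(λ/2) Σ_{k=1}^n (1 − cos(⟨t, a_k⟩ z))) dt ] W(dz), where |t| = max_j |t_j|. -/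
/-! The functional `f ↦ log ∫ exp f dμ` is convex, and the inequality is Jensen's inequality for
it over `W`. Concretely, with `L z = log ∫ exp (f t z) dμ(t)` the functions `h t z = f t z - L z`
satisfy `∫ exp (h t z) dμ(t) = 1`, so Jensen's inequality for `exp` and Fubini give
`∫ exp (∫ h t z dW(z)) dμ(t) ≤ ∫∫ exp (h t z) dμ(t) dW(z) = 1`;
multiplying by `exp (∫ L dW)` is the claim. -/

open MeasureTheory ProbabilityTheory Metric
open scoped BigOperators RealInnerProductSpace

noncomputable section

open Function Real Set

section LogIntegralExp

variable {α β : Type*} [MeasurableSpace α] [MeasurableSpace β] {μ : Measure α} {W : Measure β}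

theorem exp_integral_le_integral_exp [IsProbabilityMeasure W] {g : β → ℝ} (hg : Integrable g W)
    (hexp : Integrable (fun y ↦ exp (g y)) W) : exp (∫ y, g y ∂W) ≤ ∫ y, exp (g y) ∂W :=
  convexOn_exp.map_integral_le continuous_exp.continuousOn isClosed_univ
    (.of_forall fun _ ↦ mem_univ _) hg hexp

theorem integrable_exp_of_le [IsFiniteMeasure μ] {g : α → ℝ} (hg : AEStronglyMeasurable g μ)
    (M : ℝ) (hM : ∀ x, g x ≤ M) : Integrable (fun x ↦ exp (g x)) μ :=
  .of_bound (continuous_exp.comp_aestronglyMeasurable hg) (exp M) <| .of_forall fun x ↦ by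
    rw [norm_of_nonneg (exp_nonneg _)]; exact exp_le_exp.2 (hM x)

theorem abs_log_integral_exp_sub_log_le [IsFiniteMeasure μ] [NeZero μ] {g : α → ℝ} {M : ℝ}
    (hg : AEStronglyMeasurable g μ) (hM : ∀ x, |g x| ≤ M) :
    |log (∫ x, exp (g x) ∂μ) - log (μ.real univ)| ≤ M := by
  have hint := integrable_exp_of_le hg M fun x ↦ (abs_le.1 (hM x)).2
  have hlower : exp (-M) * μ.real univ ≤ ∫ x, exp (g x) ∂μ := by
    rw [mul_comm, ← smul_eq_mul, ← integral_const]
    exact integral_mono (integrable_const _) hint fun x ↦ exp_le_exp.2 (abs_le.1 (hM x)).1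
  have hupper : ∫ x, exp (g x) ∂μ ≤ exp M * μ.real univ := by
    rw [mul_comm, ← smul_eq_mul, ← integral_const]
    exact integral_mono hint (integrable_const _) fun x ↦ exp_le_exp.2 (abs_le.1 (hM x)).2
  have hpos : 0 < exp (-M) * μ.real univ := mul_pos (exp_pos _) measureReal_univ_pos
  have h1 := log_le_log hpos hlower
  have h2 := log_le_log (hpos.trans_le hlower) hupper
  rw [log_mul (exp_pos _).ne' measureReal_univ_pos.ne', log_exp] at h1 h2
  rw [abs_le]; constructor <;> linarith

theorem integral_exp_integral_le_one [IsFiniteMeasure μ] [IsProbabilityMeasure W]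
    {h : α → β → ℝ} {M : ℝ} (hh : Measurable (uncurry h)) (hM : ∀ x y, |h x y| ≤ M)
    (hdensity : ∀ y, ∫ x, exp (h x y) ∂μ = 1) :
    ∫ x, exp (∫ y, h x y ∂W) ∂μ ≤ 1 := by
  have hhx : ∀ x, Measurable (h x) := fun x ↦ hh.comp measurable_prodMk_left
  have hexp_int : Integrable (uncurry fun x y ↦ exp (h x y)) (μ.prod W) :=
    integrable_exp_of_le hh.aestronglyMeasurable M fun z ↦ (abs_le.1 (hM z.1 z.2)).2
  have jensen : ∀ x, exp (∫ y, h x y ∂W) ≤ ∫ y, exp (h x y) ∂W := fun x ↦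
    exp_integral_le_integral_exp (.of_bound (hhx x).aestronglyMeasurable M (.of_forall (hM x)))
      (integrable_exp_of_le (hhx x).aestronglyMeasurable M fun y ↦ (abs_le.1 (hM x y)).2)
  calc ∫ x, exp (∫ y, h x y ∂W) ∂μ ≤ ∫ x, ∫ y, exp (h x y) ∂W ∂μ :=
        integral_mono_of_nonneg (.of_forall fun _ ↦ exp_nonneg _) hexp_int.integral_prod_left
          (.of_forall jensen)
    _ = ∫ y, ∫ x, exp (h x y) ∂μ ∂W := integral_integral_swap hexp_int
    _ = 1 := by simp [hdensity]

theorem log_integral_exp_integral_le [IsFiniteMeasure μ] [IsProbabilityMeasure W]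
    {f : α → β → ℝ} {M : ℝ} (hf : Measurable (uncurry f)) (hM : ∀ x y, |f x y| ≤ M) :
    log (∫ x, exp (∫ y, f x y ∂W) ∂μ) ≤ ∫ y, log (∫ x, exp (f x y) ∂μ) ∂W := by
  rcases eq_zero_or_neZero μ with rfl | hμ
  · simp
  have hfy : ∀ y, Measurable (f · y) := fun y ↦ hf.comp measurable_prodMk_right
  have hf_int : ∀ x, Integrable (f x) W := fun x ↦
    .of_bound (hf.comp measurable_prodMk_left).aestronglyMeasurable M (.of_forall (hM x))
  set L : β → ℝ := fun y ↦ log (∫ x, exp (f x y) ∂μ)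
  set I := ∫ y, L y ∂W
  have hL_meas : Measurable L :=
    measurable_log.comp (hf.exp.stronglyMeasurable.integral_prod_left).measurable
  have hL_bound : ∀ y, |L y| ≤ M + |log (μ.real univ)| := fun y ↦ by
    have := abs_log_integral_exp_sub_log_le (μ := μ) (hfy y).aestronglyMeasurable (hM · y)
    linarith [abs_sub_abs_le_abs_sub (L y) (log (μ.real univ))]
  have hL_int : Integrable L W :=
    .of_bound hL_meas.aestronglyMeasurable _ (.of_forall hL_bound)
  have hdensity : ∀ y, ∫ x, exp (f x y - L y) ∂μ = 1 := fun y ↦ by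
    have hpos : 0 < ∫ x, exp (f x y) ∂μ := integral_exp_pos <|
      integrable_exp_of_le (hfy y).aestronglyMeasurable M fun x ↦ (abs_le.1 (hM x y)).2
    simp only [L, exp_sub, integral_div, exp_log hpos, div_self hpos.ne']
  have hle_one : ∫ x, exp (∫ y, (f x y - L y) ∂W) ∂μ ≤ 1 :=
    integral_exp_integral_le_one (hf.sub (hL_meas.comp measurable_snd))
      (fun x y ↦ (abs_sub _ _).trans (add_le_add (hM x y) (hL_bound y))) hdensity
  have hsplit : ∀ x, ∫ y, (f x y - L y) ∂W = ∫ y, f x y ∂W - I := fun x ↦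
    integral_sub (hf_int x) hL_int
  have hexp_int : Integrable (fun x ↦ exp (∫ y, f x y ∂W)) μ := by
    refine integrable_exp_of_le hf.stronglyMeasurable.integral_prod_right'.aestronglyMeasurable
      M fun x ↦ ?_
    simpa using integral_mono (hf_int x) (integrable_const M) fun y ↦ (abs_le.1 (hM x y)).2
  rw [log_le_iff_le_exp (integral_exp_pos hexp_int)]
  calc ∫ x, exp (∫ y, f x y ∂W) ∂μ = exp I * ∫ x, exp (∫ y, (f x y - L y) ∂W) ∂μ := by
        simp only [hsplit, ← integral_const_mul, ← exp_add, add_sub_cancel]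
    _ ≤ exp I := mul_le_of_le_one_right (exp_nonneg _) hle_one

theorem volume_cube_lt_top (d : ℕ) (T : ℝ) : volume (cube d T) < ⊤ := by
  have hcube : cube d T = WithLp.ofLp ⁻¹' Icc (fun _ ↦ -T) fun _ ↦ T := by
    ext t; simp [cube, abs_le, Pi.le_def, forall_and]
  rw [hcube, (PiLp.volume_preserving_ofLp _).measure_preimage
    measurableSet_Icc.nullMeasurableSet]
  exact isCompact_Icc.measure_lt_top

instance isFiniteMeasure_restrict_cube (d : ℕ) (T : ℝ) :
    IsFiniteMeasure (volume.restrict (cube d T)) :=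
  isFiniteMeasure_restrict.2 (volume_cube_lt_top d T).ne

theorem abs_one_sub_cos_le (x : ℝ) : |1 - cos x| ≤ 2 := by
  rw [abs_le]; constructor <;> linarith [neg_one_le_cos x, cos_le_one x]

theorem stmt_7_general (d n : ℕ) (a : Fin n → EuclideanSpace ℝ (Fin d))
    (W : Measure ℝ) [IsProbabilityMeasure W] (lam T : ℝ) :
    Real.log (∫ t in cube d T,
        Real.exp (-(1 / 2) * ∑ k, ∫ z, (1 - Real.cos (⟪t, a k⟫ * z)) * lam ∂W)) ≤
      ∫ z, Real.log (∫ t in cube d T,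
        Real.exp (-(lam / 2) * ∑ k, (1 - Real.cos (⟪t, a k⟫ * z)))) ∂W := by
  have hcos_int : ∀ (c : ℝ), Integrable (fun z ↦ (1 - cos (c * z)) * lam) W := fun c ↦
    (Integrable.of_bound (by fun_prop) 2 (.of_forall fun z ↦ abs_one_sub_cos_le _)).mul_const lam
  have hsum_integral : ∀ t : EuclideanSpace ℝ (Fin d),
      -(1 / 2) * ∑ k, ∫ z, (1 - cos (⟪t, a k⟫ * z)) * lam ∂W =
        ∫ z, -(lam / 2) * ∑ k, (1 - cos (⟪t, a k⟫ * z)) ∂W := fun t ↦ by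
    rw [← integral_finsetSum _ fun k _ ↦ hcos_int _, ← integral_const_mul]
    congr 1 with z
    rw [← Finset.sum_mul]; ring
  have hbound : ∀ (t : EuclideanSpace ℝ (Fin d)) (z : ℝ),
      |-(lam / 2) * ∑ k, (1 - cos (⟪t, a k⟫ * z))| ≤ |lam| * n := fun t z ↦
    calc |-(lam / 2) * ∑ k, (1 - cos (⟪t, a k⟫ * z))|
        = |lam| / 2 * |∑ k, (1 - cos (⟪t, a k⟫ * z))| := by
          rw [abs_mul, abs_neg, abs_div, abs_two]
      _ ≤ |lam| / 2 * ∑ _k : Fin n, 2 := by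
          gcongr
          exact (Finset.abs_sum_le_sum_abs _ _).trans
            (Finset.sum_le_sum fun k _ ↦ abs_one_sub_cos_le _)
      _ = |lam| * n := by
          rw [Finset.sum_const, Finset.card_univ, Fintype.card_fin, nsmul_eq_mul]; ring
  simp only [hsum_integral]
  exact log_integral_exp_integral_le (Continuous.measurable (by fun_prop)) hbound

/-- Jensen-type inequality \eqref{dd11}: for any probability measure `W` on `ℝ` and
`λ, T > 0`,
`log ∫_{|t|≤T} exp(-(1/2) Σ_k ∫ (1 - cos(⟨t,a_k⟩z)) λ W(dz)) dt
  ≤ ∫ [log ∫_{|t|≤T} exp(-(λ/2) Σ_k (1 - cos(⟨t,a_k⟩z))) dt] W(dz)`. -/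
theorem stmt_7 (d n : ℕ) (a : Fin n → EuclideanSpace ℝ (Fin d))
    (W : Measure ℝ) [IsProbabilityMeasure W] (lam T : ℝ) (hlam : 0 < lam) (hT : 0 < T) :
    Real.log (∫ t in cube d T,
        Real.exp (-(1 / 2) * ∑ k, ∫ z, (1 - Real.cos (⟪t, a k⟫ * z)) * lam ∂W)) ≤
      ∫ z, Real.log (∫ t in cube d T,
        Real.exp (-(lam / 2) * ∑ k, (1 - Real.cos (⟪t, a k⟫ * z)))) ∂W :=
  stmt_7_general d n a W lam T
end LogIntegralExp
end
end
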